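/- Let x, x' ∈ Σ_q^n with supp(x−x') = {i_1 < i_2 < ⋯ < i_d}, d ≥ 2; let 0 = j_0 < j_1 < ⋯ < j_m = n be the right endpoints of the runs of x and 0 = j'_0 < j'_1 < ⋯ < j'_{m'} = n the right endpoints of the runs of x'. Then for every d' > d: (a) the number of pairs (j_i, j'_{i'}) with j_i < j'_{i'}, supp(x−x') ∩ [j_i, j'_{i'}] = ∅, and d_H(x_{[n]∖{j_i}}, x'_{[n]∖{j'_{i'}}}) = d' is at most n − d; and (b) the number of pairs (j_i, j'_{i'}) with j_i > j'_{i'}, supp(x−x') ∩ [j'_{i'}, j_i] = ∅, and d_H(x_{[n]∖{j_i}}, x'_{[n]∖{j'_{i'}}}) = d' is at most n − d. -/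

import Mathlib

/-- Sequences of length `n` are modelled as functions `ℕ → Fin q` whose relevant
positions are `1, …, n` (1-based, as in the paper). `delN x j` deletes position `j`. -/
def delN {q : ℕ} (x : ℕ → Fin q) (j : ℕ) : ℕ → Fin q :=
  fun i => if i < j then x i else x (i + 1)

/-- Hamming distance between two length-`n` sequences (positions `1, …, n`). -/
def hdist {q : ℕ} (n : ℕ) (u v : ℕ → Fin q) : ℕ :=
  ((Finset.Icc 1 n).filter fun i => u i ≠ v i).card

/-- `j 0 = 0 < j 1 < ⋯ < j m = n` are the right endpoints of the runs of `x`. -/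
def IsRunDecomp {q : ℕ} (n m : ℕ) (x : ℕ → Fin q) (j : ℕ → ℕ) : Prop :=
  j 0 = 0 ∧ j m = n ∧ (∀ i, i < m → j i < j (i + 1)) ∧
  (∀ i, 1 ≤ i → i ≤ m → ∀ a b, j (i - 1) + 1 ≤ a → a ≤ j i →
      j (i - 1) + 1 ≤ b → b ≤ j i → x a = x b) ∧
  (∀ i, 1 ≤ i → i < m → x (j i) ≠ x (j i + 1))

/-!
Send a counted pair `(j_i, j'_{i'})` to the right endpoint `j'_{i'}`; it lies in `[n]` and
outside `supp(x − x')`, a set of size `n − d`. The map is injective: if two endpoints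
`j_i < j_{i₂}` of `x` both precede `j'_{i'}` with no support in between, then moving the deletion
in `x` from `j_i` to `j_{i₂}` only repairs the mismatch at position `j_i` created by the run
boundary there, so the Hamming distance drops strictly and cannot take the value `d'` twice.
Part (b) is part (a) with the roles of `x` and `x'` exchanged.
-/

open Finset

section DeleteHamming

variable {q : ℕ}

lemma delN_of_lt (x : ℕ → Fin q) {a i : ℕ} (h : i < a) : delN x a i = x i := if_pos h

lemma delN_of_le (x : ℕ → Fin q) {a i : ℕ} (h : a ≤ i) : delN x a i = x (i + 1) :=
  if_neg (Nat.not_lt.2 h)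

lemma hdist_comm (n : ℕ) (u v : ℕ → Fin q) : hdist n u v = hdist n v u := by
  simp only [hdist, ne_comm]

lemma hdist_delN_lt_of_lt {n a a₂ b : ℕ} {x y : ℕ → Fin q}
    (ha : 1 ≤ a) (h₁ : a < a₂) (h₂ : a₂ < b) (hb : b ≤ n)
    (hxy : ∀ k, a ≤ k → k ≤ b → x k = y k) (hrun : x (a + 1) ≠ x a) :
    hdist (n - 1) (delN x a₂) (delN y b) < hdist (n - 1) (delN x a) (delN y b) := by
  have hsub : ∀ i ∈ Icc 1 (n - 1),
      delN x a₂ i ≠ delN y b i → delN x a i ≠ delN y b i := by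
    intro i _ hi
    rcases lt_or_ge i a with hia | hia
    · rwa [delN_of_lt x hia, ← delN_of_lt x (hia.trans h₁)]
    rcases lt_or_ge i a₂ with hia₂ | hia₂
    · rw [delN_of_lt x hia₂, delN_of_lt y (by omega), hxy i hia (by omega)] at hi
      exact absurd rfl hi
    · rwa [delN_of_le x hia, ← delN_of_le x hia₂]
  refine card_lt_card <| (ssubset_iff_of_subset (monotone_filter_right _ hsub)).2 ⟨a, ?_, ?_⟩
  · rw [mem_filter, delN_of_le x le_rfl, delN_of_lt y (by omega), ← hxy a le_rfl (by omega)]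
    exact ⟨mem_Icc.2 ⟨ha, by omega⟩, hrun⟩
  · rw [mem_filter, delN_of_lt x h₁, delN_of_lt y (by omega), hxy a le_rfl (by omega)]
    exact fun h => h.2 rfl

end DeleteHamming

namespace IsRunDecomp

variable {q n m : ℕ} {x : ℕ → Fin q} {j : ℕ → ℕ}

lemma strictMonoOn (hx : IsRunDecomp n m x j) : StrictMonoOn j (Set.Iic m) :=
  strictMonoOn_Iic_of_lt_succ hx.2.2.1

lemma lt_of_lt (hx : IsRunDecomp n m x j) {s t : ℕ} (hst : s < t) (ht : t ≤ m) : j s < j t :=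
  hx.strictMonoOn (Set.mem_Iic.2 (hst.le.trans ht)) (Set.mem_Iic.2 ht) hst

lemma one_le (hx : IsRunDecomp n m x j) {i : ℕ} (hi : 1 ≤ i) (him : i ≤ m) : 1 ≤ j i :=
  (hx.1 ▸ hx.lt_of_lt hi him :)

lemma le (hx : IsRunDecomp n m x j) {i : ℕ} (him : i ≤ m) : j i ≤ n := by
  rcases him.lt_or_eq with h | rfl
  · exact hx.2.1 ▸ (hx.lt_of_lt h le_rfl).le
  · exact hx.2.1.le

lemma apply_succ_ne (hx : IsRunDecomp n m x j) {i : ℕ} (hi : 1 ≤ i) (him : i < m) :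
    x (j i + 1) ≠ x (j i) :=
  fun h => hx.2.2.2.2 i hi him h.symm

lemma hdist_delN_injOn {y : ℕ → Fin q} (hx : IsRunDecomp n m x j) {i i₂ b : ℕ}
    (hi : i ∈ Icc 1 m) (hi₂ : i₂ ∈ Icc 1 m) (hb : b ≤ n)
    (hlt : j i < b) (hlt₂ : j i₂ < b)
    (hxy : ∀ k, j i ≤ k → k ≤ b → x k = y k)
    (hxy₂ : ∀ k, j i₂ ≤ k → k ≤ b → x k = y k)
    (heq : hdist (n - 1) (delN x (j i)) (delN y b) = hdist (n - 1) (delN x (j i₂)) (delN y b)) :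
    i = i₂ := by
  rw [mem_Icc] at hi hi₂
  have hdist_lt : ∀ {s t}, 1 ≤ s → s < t → t ≤ m → j t < b →
      (∀ k, j s ≤ k → k ≤ b → x k = y k) →
      hdist (n - 1) (delN x (j t)) (delN y b) < hdist (n - 1) (delN x (j s)) (delN y b) :=
    fun hs hst ht htb hxy =>
      hdist_delN_lt_of_lt (hx.one_le hs (by omega)) (hx.lt_of_lt hst ht) htb hb hxy
        (hx.apply_succ_ne hs (by omega))
  rcases lt_trichotomy i i₂ with h | h | h
  · exact absurd heq (hdist_lt hi.1 h hi₂.2 hlt₂ hxy).ne'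
  · exact h
  · exact absurd heq (hdist_lt hi₂.1 h hi.2 hlt hxy₂).ne

end IsRunDecomp

lemma eq_of_filter_ne_inter_Icc_eq_empty {q n a b : ℕ} {x y : ℕ → Fin q}
    (h : (Icc 1 n).filter (fun k => x k ≠ y k) ∩ Icc a b = ∅) (ha : 1 ≤ a) (hb : b ≤ n)
    (k : ℕ) (hak : a ≤ k) (hkb : k ≤ b) : x k = y k := by
  by_contra hne
  have : k ∈ (Icc 1 n).filter (fun k => x k ≠ y k) ∩ Icc a b := by
    simp only [mem_inter, mem_filter, mem_Icc]
    exact ⟨⟨⟨by omega, by omega⟩, hne⟩, hak, hkb⟩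
  simp [h] at this

lemma card_pairs_endpoint_lt_le {q n m m' d : ℕ} {x x' : ℕ → Fin q}
    (hsupp : ((Icc 1 n).filter fun k => x k ≠ x' k).card = d)
    {j j' : ℕ → ℕ} (hx : IsRunDecomp n m x j) (hx' : IsRunDecomp n m' x' j') (d' : ℕ) :
    ((Icc 1 m ×ˢ Icc 1 m').filter fun p =>
        j p.1 < j' p.2 ∧
        (((Icc 1 n).filter fun k => x k ≠ x' k) ∩ Icc (j p.1) (j' p.2) = ∅) ∧
        hdist (n - 1) (delN x (j p.1)) (delN x' (j' p.2)) = d').card ≤ n - d := by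
  set supp := (Icc 1 n).filter fun k => x k ≠ x' k
  have hcard : (Icc 1 n \ supp).card = n - d := by
    rw [card_sdiff_of_subset (filter_subset _ _), hsupp, Nat.card_Icc, Nat.add_sub_cancel]
  rw [← hcard]
  refine card_le_card_of_injOn (fun p => j' p.2) ?_ ?_
  · intro p hp
    simp only [coe_filter, mem_product, mem_Icc, Set.mem_ofPred_eq] at hp
    obtain ⟨⟨-, hp₂⟩, hlt, hfree, -⟩ := hp
    refine mem_sdiff.2 ⟨mem_Icc.2 ⟨hx'.one_le hp₂.1 hp₂.2, hx'.le hp₂.2⟩, fun hmem => ?_⟩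
    have : j' p.2 ∈ supp ∩ Icc (j p.1) (j' p.2) :=
      mem_inter.2 ⟨hmem, mem_Icc.2 ⟨hlt.le, le_rfl⟩⟩
    simp [hfree] at this
  · intro p hp r hr (hpr : j' p.2 = j' r.2)
    simp only [coe_filter, mem_product, Set.mem_ofPred_eq] at hp hr
    obtain ⟨⟨hp₁, hp₂⟩, hplt, hpfree, hpd⟩ := hp
    obtain ⟨⟨hr₁, hr₂⟩, hrlt, hrfree, hrd⟩ := hr
    have h₂ : p.2 = r.2 :=
      hx'.strictMonoOn.injOn (Set.mem_Iic.2 (mem_Icc.1 hp₂).2)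
        (Set.mem_Iic.2 (mem_Icc.1 hr₂).2) hpr
    have hb := hx'.le (mem_Icc.1 hp₂).2
    have hfree_of_mem : ∀ {i}, i ∈ Icc 1 m → supp ∩ Icc (j i) (j' p.2) = ∅ →
        ∀ k, j i ≤ k → k ≤ j' p.2 → x k = x' k := fun hi h =>
      eq_of_filter_ne_inter_Icc_eq_empty h (hx.one_le (mem_Icc.1 hi).1 (mem_Icc.1 hi).2) hb
    rw [← hpr] at hrlt hrfree hrd
    have h₁ : p.1 = r.1 := hx.hdist_delN_injOn hp₁ hr₁ hb hplt hrlt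
      (hfree_of_mem hp₁ hpfree) (hfree_of_mem hr₁ hrfree) (hpd.trans hrd.symm)
    exact Prod.ext h₁ h₂

theorem stmt12_general (q n m m' d : ℕ)
    (x x' : ℕ → Fin q)
    (hsupp : ((Finset.Icc 1 n).filter fun k => x k ≠ x' k).card = d)
    (j j' : ℕ → ℕ)
    (hx : IsRunDecomp n m x j) (hx' : IsRunDecomp n m' x' j')
    (d' : ℕ) :
    ((Finset.Icc 1 m ×ˢ Finset.Icc 1 m').filter fun p =>
        j p.1 < j' p.2 ∧
        (((Finset.Icc 1 n).filter fun k => x k ≠ x' k) ∩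
          Finset.Icc (j p.1) (j' p.2) = ∅) ∧
        hdist (n - 1) (delN x (j p.1)) (delN x' (j' p.2)) = d').card ≤ n - d ∧
    ((Finset.Icc 1 m ×ˢ Finset.Icc 1 m').filter fun p =>
        j' p.2 < j p.1 ∧
        (((Finset.Icc 1 n).filter fun k => x k ≠ x' k) ∩
          Finset.Icc (j' p.2) (j p.1) = ∅) ∧
        hdist (n - 1) (delN x (j p.1)) (delN x' (j' p.2)) = d').card ≤ n - d := by
  have hsupp_comm :
      ((Icc 1 n).filter fun k => x' k ≠ x k) = (Icc 1 n).filter fun k => x k ≠ x' k := by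
    simp only [ne_comm]
  refine ⟨card_pairs_endpoint_lt_le hsupp hx hx' d', ?_⟩
  refine le_trans ?_ (card_pairs_endpoint_lt_le (hsupp_comm ▸ hsupp) hx' hx d')
  refine card_le_card_of_injOn Prod.swap (fun p hp => ?_) Prod.swap_injective.injOn
  simp only [coe_filter, mem_product, Set.mem_ofPred_eq, Prod.fst_swap, Prod.snd_swap] at hp ⊢
  rw [hsupp_comm, hdist_comm]
  exact ⟨hp.1.symm, hp.2⟩

/-- For every `d' > d = |supp(x − x')|`: (a) at most `n − d` pairs of run endpoints
`(j_i, j'_{i'})` satisfy `j_i < j'_{i'}`, `supp(x − x') ∩ [j_i, j'_{i'}] = ∅` and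
`d_H(x_{[n]∖{j_i}}, x'_{[n]∖{j'_{i'}}}) = d'`; and (b) at most `n − d` pairs satisfy
`j_i > j'_{i'}`, `supp(x − x') ∩ [j'_{i'}, j_i] = ∅` and the same distance condition. -/
theorem stmt12 (q n m m' d : ℕ) (hq : 2 ≤ q) (hd : 2 ≤ d)
    (x x' : ℕ → Fin q)
    (hsupp : ((Finset.Icc 1 n).filter fun k => x k ≠ x' k).card = d)
    (j j' : ℕ → ℕ)
    (hx : IsRunDecomp n m x j) (hx' : IsRunDecomp n m' x' j')
    (d' : ℕ) (hd' : d < d') :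
    ((Finset.Icc 1 m ×ˢ Finset.Icc 1 m').filter fun p =>
        j p.1 < j' p.2 ∧
        (((Finset.Icc 1 n).filter fun k => x k ≠ x' k) ∩
          Finset.Icc (j p.1) (j' p.2) = ∅) ∧
        hdist (n - 1) (delN x (j p.1)) (delN x' (j' p.2)) = d').card ≤ n - d ∧
    ((Finset.Icc 1 m ×ˢ Finset.Icc 1 m').filter fun p =>
        j' p.2 < j p.1 ∧
        (((Finset.Icc 1 n).filter fun k => x k ≠ x' k) ∩
          Finset.Icc (j' p.2) (j p.1) = ∅) ∧
        hdist (n - 1) (delN x (j p.1)) (delN x' (j' p.2)) = d').card ≤ n - d :=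
  stmt12_general q n m m' d x x' hsupp j j' hx hx' d'
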